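/- arXiv:1409.1208 — 3 statements merged into one kernel-verified Lean document; each statement's English description precedes it below -/
import Mathlib

section
/- With the same hypotheses, T·(y₁ + x₂) = (y₁ + x₂)·T, i.e. the operator T = Ψ(x₁-y₁+y₂)e^{2πi y₁x₂} commutes with y₁ + x₂. -/
open Complex

/-- A formal algebraic setting for Faddeev's operator `T = Ψ(x₁-y₁+y₂)·e^{2πi y₁x₂}`:
an associative ℂ-algebra with generators `x₁,y₁,x₂,y₂` satisfying `[xᵢ,yᵢ] = 1/(2πi)` and all
cross commutators zero, together with operations `Ψ`, `Ψ'` and a formal exponential `expE`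
satisfying the commutation rules `f(a)g = g f(a) + [a,g] f'(a)` and
`e^a g = (g + [a,g]) e^a` whenever `[a,g]` is central. -/
structure FaddeevSystem (R : Type*) [Ring R] [Algebra ℂ R] where
  x₁ : R
  y₁ : R
  x₂ : R
  y₂ : R
  Ψ : R → R
  Ψ' : R → R
  expE : R → R
  comm11 : x₁ * y₁ - y₁ * x₁ = algebraMap ℂ R ((2 * (Real.pi : ℂ) * I)⁻¹)
  comm22 : x₂ * y₂ - y₂ * x₂ = algebraMap ℂ R ((2 * (Real.pi : ℂ) * I)⁻¹)
  comm_x1x2 : x₁ * x₂ = x₂ * x₁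
  comm_x1y2 : x₁ * y₂ = y₂ * x₁
  comm_y1x2 : y₁ * x₂ = x₂ * y₁
  comm_y1y2 : y₁ * y₂ = y₂ * y₁
  deriv_rule : ∀ a g : R, (∀ r : R, (a * g - g * a) * r = r * (a * g - g * a)) →
    Ψ a * g = g * Ψ a + (a * g - g * a) * Ψ' a
  exp_rule : ∀ a g : R, (∀ r : R, (a * g - g * a) * r = r * (a * g - g * a)) →
    expE a * g = (g + a * g - g * a) * expE a
  exp_add : ∀ a g : R, a * g = g * a → expE (a + g) = expE a * expE g

/-- Faddeev's operator `T = Ψ(x₁ - y₁ + y₂)·e^{2πi y₁ x₂}`. -/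
noncomputable def FaddeevSystem.T {R : Type*} [Ring R] [Algebra ℂ R]
    (S : FaddeevSystem R) : R :=
  S.Ψ (S.x₁ - S.y₁ + S.y₂) * S.expE (algebraMap ℂ R (2 * (Real.pi : ℂ) * I) * (S.y₁ * S.x₂))

/-- `T·(y₁+x₂) = (y₁+x₂)·T`. -/
theorem T_relation_y1_add_x2 {R : Type*} [Ring R] [Algebra ℂ R] (S : FaddeevSystem R) :
    S.T * (S.y₁ + S.x₂) = (S.y₁ + S.x₂) * S.T := by
  set g := S.y₁ + S.x₂ with hg
  set a := S.x₁ - S.y₁ + S.y₂ with ha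
  set A := algebraMap ℂ R (2 * (Real.pi : ℂ) * I) * (S.y₁ * S.x₂) with hA
  have hc1 : S.x₁ * S.y₁ = S.y₁ * S.x₁ + algebraMap ℂ R ((2 * (Real.pi : ℂ) * I)⁻¹) := by
    rw [← S.comm11]; abel
  have hc2 : S.x₂ * S.y₂ = S.y₂ * S.x₂ + algebraMap ℂ R ((2 * (Real.pi : ℂ) * I)⁻¹) := by
    rw [← S.comm22]; abel
  have hag : a * g = g * a := by
    rw [ha, hg]
    simp only [sub_mul, mul_sub, add_mul, mul_add, hc1, hc2, S.comm_x1x2, S.comm_x1y2,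
      S.comm_y1x2, S.comm_y1y2]
    abel
  have hswap : ∀ r : R, S.y₁ * (S.x₂ * r) = S.x₂ * (S.y₁ * r) := fun r => by
    rw [← mul_assoc, S.comm_y1x2, mul_assoc]
  have hAg : A * g = g * A := by
    have h0 : (S.y₁ * S.x₂) * g = g * (S.y₁ * S.x₂) := by
      rw [hg]
      simp only [mul_add, add_mul, mul_assoc, hswap, S.comm_y1x2]
    rw [hA, mul_assoc, h0, ← mul_assoc, Algebra.commutes, mul_assoc]
  have hcent_a : ∀ r : R, (a * g - g * a) * r = r * (a * g - g * a) := fun r => by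
    rw [sub_eq_zero.mpr hag]; simp
  have hcent_A : ∀ r : R, (A * g - g * A) * r = r * (A * g - g * A) := fun r => by
    rw [sub_eq_zero.mpr hAg]; simp
  have hE : S.expE A * g = g * S.expE A := by
    rw [S.exp_rule A g hcent_A, hAg, add_sub_cancel_right]
  have hPsi : S.Ψ a * g = g * S.Ψ a := by
    rw [S.deriv_rule a g hcent_a, sub_eq_zero.mpr hag]; simp
  show S.Ψ a * S.expE A * g = g * (S.Ψ a * S.expE A)
  rw [mul_assoc, hE, ← mul_assoc, hPsi, mul_assoc]
end

section
/- The Gaussian integral over A_N = ℝ × ℤ/Nℤ: γ := ∫_{A_N} ⟨x,n⟩ d(x,n) = N^{-1/2} Σ_{n∈ℤ/Nℤ} ∫_ℝ e^{πi x²} e^{-πi n(n+N)/N} dx lies on the unit circle, assuming the oscillatory integral ∫_ℝ e^{πix²}dx is interpreted as e^{πi/4} (Fresnel) — concretely, |N^{-1/2} Σ_{n=0}^{N-1} e^{-πi n(n+N)/N}| = 1 when N is odd. -/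
open Complex

/-! For odd `N` the phase `n(n+N)/2` is an integer congruent to `n²/2` modulo `N`, so the sum is
the quadratic Gauss sum `∑ₓ ψ(-x²/2)` over `ZMod N` with the standard character `ψ`.
For a primitive character `ψ` of a finite ring and `2a` a unit, substituting `y = x + d` gives
`|∑ₓ ψ(a x²)|² = ∑_d ψ(a d²) ∑ₓ ψ(2a d x)`; the inner sum vanishes unless `d = 0`, leaving `|R|`. -/

section
variable {R K : Type*} [CommRing R] [Fintype R] [RCLike K]

def quadGaussSum (ψ : AddChar R K) (a : R) : K := ∑ x, ψ (a * x ^ 2)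

theorem quadGaussSum_mul_conj {ψ : AddChar R K} (hψ : ψ.IsPrimitive) {a : R}
    (ha : IsUnit (2 * a)) :
    quadGaussSum ψ a * starRingEnd K (quadGaussSum ψ a) = Fintype.card R := by
  classical
  have shift (x d : R) : ψ (a * (x + d) ^ 2) * starRingEnd K (ψ (a * x ^ 2)) =
      ψ (a * d ^ 2) * ψ (x * (2 * a * d)) := by
    rw [← AddChar.map_neg_eq_conj, ← AddChar.map_add_eq_mul, ← AddChar.map_add_eq_mul]
    ring_nf
  calc quadGaussSum ψ a * starRingEnd K (quadGaussSum ψ a)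
      = ∑ x, ∑ d, ψ (a * (x + d) ^ 2) * starRingEnd K (ψ (a * x ^ 2)) := by
        rw [quadGaussSum, map_sum, Finset.sum_mul_sum, Finset.sum_comm]
        refine Finset.sum_congr rfl fun x _ ↦ ?_
        exact (Equiv.sum_comp (Equiv.addLeft x) fun y ↦ ψ (a * y ^ 2) * _).symm
    _ = ∑ d, ψ (a * d ^ 2) * ∑ x, ψ (x * (2 * a * d)) := by
        simp_rw [shift, Finset.mul_sum]
        exact Finset.sum_comm
    _ = Fintype.card R := by
        simp_rw [AddChar.sum_mulShift _ hψ, ha.mul_right_eq_zero]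
        simp

theorem norm_quadGaussSum {ψ : AddChar R K} (hψ : ψ.IsPrimitive) {a : R} (ha : IsUnit (2 * a)) :
    ‖quadGaussSum ψ a‖ = √(Fintype.card R) := by
  have h := quadGaussSum_mul_conj hψ ha
  rw [RCLike.mul_conj] at h
  rw [← Real.sqrt_sq (norm_nonneg _)]
  congr 1
  exact_mod_cast h

end

theorem Finset.sum_range_eq_sum_zmod {M : Type*} [AddCommMonoid M] {N : ℕ} [NeZero N]
    (f : ZMod N → M) : ∑ n ∈ Finset.range N, f n = ∑ x, f x :=
  Finset.sum_nbij' (↑) ZMod.val (by simp) (by simp [ZMod.val_lt])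
    (fun n hn ↦ ZMod.val_cast_of_lt (Finset.mem_range.mp hn)) (by simp) (by simp)

open Real in
theorem Complex.exp_neg_pi_mul_I_mul_add_div_eq_stdAddChar {N : ℕ} [NeZero N] (hodd : Odd N)
    {m : ZMod N} (hm : 2 * m = 1) (n : ℕ) :
    exp (-π * I * n * (n + N) / N) = ZMod.stdAddChar (-m * (n : ZMod N) ^ 2) := by
  obtain ⟨k, hk⟩ : Even (n * (n + N)) := by
    rcases Nat.even_or_odd n with hn | hn
    · exact hn.mul_right _
    · exact (hn.add_odd hodd).mul_left _
  have hkm : (k : ZMod N) = m * n ^ 2 := calc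
    (k : ZMod N) = m * ((n * (n + N) : ℕ) : ZMod N) := by
      rw [hk]; push_cast; linear_combination (-(k : ZMod N)) * hm
    _ = m * n ^ 2 := by push_cast; rw [ZMod.natCast_self]; ring
  rw [show -m * (n : ZMod N) ^ 2 = ((-k : ℤ) : ZMod N) by push_cast; rw [hkm]; ring,
    ZMod.stdAddChar_coe]
  have hkC : ((n * (n + N) : ℕ) : ℂ) = k + k := by rw [hk]; push_cast; ring
  have hN0 : (N : ℂ) ≠ 0 := Nat.cast_ne_zero.mpr (NeZero.ne N)
  congr 1
  field_simp
  push_cast at hkC ⊢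
  linear_combination -hkC

theorem gauss_sum_unit_modulus_general (N : ℕ) (hodd : Odd N) :
    ‖((Real.sqrt N : ℝ) : ℂ)⁻¹ *
      ∑ n ∈ Finset.range N,
        Complex.exp (-(Real.pi : ℂ) * I * (n : ℂ) * ((n : ℂ) + (N : ℂ)) / (N : ℂ))‖ = 1 := by
  have : NeZero N := ⟨hodd.pos.ne'⟩
  have two_isUnit : IsUnit (2 : ZMod N) := by
    exact_mod_cast (ZMod.isUnit_iff_coprime 2 N).mpr (Nat.coprime_two_left.mpr hodd)
  obtain ⟨m, hm⟩ := two_isUnit.exists_right_inv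
  have hsum : ∑ n ∈ Finset.range N, exp (-(Real.pi : ℂ) * I * n * (n + N) / N) =
      quadGaussSum ZMod.stdAddChar (-m) := by
    simp_rw [exp_neg_pi_mul_I_mul_add_div_eq_stdAddChar hodd hm]
    exact Finset.sum_range_eq_sum_zmod fun x ↦ ZMod.stdAddChar (-m * x ^ 2)
  have h2m : IsUnit (2 * -m) := by rw [mul_neg, hm]; exact isUnit_one.neg
  rw [hsum, norm_mul, norm_quadGaussSum (ZMod.isPrimitive_stdAddChar N) h2m, ZMod.card,
    norm_inv, Complex.norm_real, Real.norm_of_nonneg (Real.sqrt_nonneg _)]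
  exact inv_mul_cancel₀ (Real.sqrt_ne_zero'.mpr (by exact_mod_cast hodd.pos))

/-- for odd positive `N`, the normalized Gauss sum
`N^{-1/2} Σ_{n=0}^{N-1} exp(-πi n(n+N)/N)` has absolute value `1`. -/
theorem gauss_sum_unit_modulus (N : ℕ) (hN : 0 < N) (hodd : Odd N) :
    ‖((Real.sqrt N : ℝ) : ℂ)⁻¹ *
      ∑ n ∈ Finset.range N,
        Complex.exp (-(Real.pi : ℂ) * I * (n : ℂ) * ((n : ℂ) + (N : ℂ)) / (N : ℂ))‖ = 1 :=
  gauss_sum_unit_modulus_general N hodd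
end

section
/- Let p, q be u-operators on L²(A) forming a Heisenberg pair of level n (i.e. ⟨p;x⟩⟨q;y⟩ = ⟨x;y⟩ⁿ ⟨q;x⟩⟨p;y⟩), and define (p+q) by ⟨p+q;x⟩ := ⟨x⟩ⁿ⟨q;x⟩⟨p;x⟩, where ⟨·⟩ is a Gaussian exponential with bicharacter ⟨·;·⟩. Then p+q is again a u-operator: ⟨p+q;x⟩⟨p+q;y⟩ = ⟨p+q;x+y⟩ for all x,y ∈ A. -/
/-- Normal form lemma: `β(c,b)ⁿ • (q a * p b) = (β(-b,b)·β(c+b,-b))ⁿ • (q (a+b) * p 0)`. -/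
theorem heisenberg_aux_core {A R : Type*} [AddCommGroup A] [Ring R] [Algebra ℂ R]
    (G : A → ℂ) (n : ℤ) (p q : A → R)
    (hp : ∀ x y, p x * p y = p (x + y)) (hq : ∀ x y, q x * q y = q (x + y))
    (hheis : ∀ x y, p x * q y =
      (G (x + y) * (G x)⁻¹ * (G y)⁻¹) ^ n • (q x * p y)) (a c b : A) :
    (G (c + b) * (G c)⁻¹ * (G b)⁻¹) ^ n • (q a * p b) =
      ((G 0 * (G (-b))⁻¹ * (G b)⁻¹) * (G c * (G (c + b))⁻¹ * (G (-b))⁻¹)) ^ n •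
        (q (a + b) * p 0) := by
  have hcb : c + b + -b = c := by abel
  have hbb : -b + b = 0 := by abel
  have h1 : p c * q b =
      (G 0 * (G (-b))⁻¹ * (G b)⁻¹) ^ n •
        ((G c * (G (c + b))⁻¹ * (G (-b))⁻¹) ^ n • (q (c + b) * p 0)) := by
    calc p c * q b
        = (p (c + b) * p (-b)) * q b := by rw [hp, hcb]
      _ = p (c + b) * (p (-b) * q b) := mul_assoc _ _ _
      _ = p (c + b) * ((G (-b + b) * (G (-b))⁻¹ * (G b)⁻¹) ^ n • (q (-b) * p b)) := by
            rw [hheis]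
      _ = p (c + b) * ((G 0 * (G (-b))⁻¹ * (G b)⁻¹) ^ n • (q (-b) * p b)) := by rw [hbb]
      _ = (G 0 * (G (-b))⁻¹ * (G b)⁻¹) ^ n • (p (c + b) * (q (-b) * p b)) :=
            mul_smul_comm _ _ _
      _ = (G 0 * (G (-b))⁻¹ * (G b)⁻¹) ^ n • ((p (c + b) * q (-b)) * p b) := by
            rw [mul_assoc (p (c + b)) (q (-b)) (p b)]
      _ = (G 0 * (G (-b))⁻¹ * (G b)⁻¹) ^ n •
            (((G (c + b + -b) * (G (c + b))⁻¹ * (G (-b))⁻¹) ^ n •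
              (q (c + b) * p (-b))) * p b) := by rw [hheis (c + b) (-b)]
      _ = (G 0 * (G (-b))⁻¹ * (G b)⁻¹) ^ n •
            (((G c * (G (c + b))⁻¹ * (G (-b))⁻¹) ^ n •
              (q (c + b) * p (-b))) * p b) := by rw [hcb]
      _ = (G 0 * (G (-b))⁻¹ * (G b)⁻¹) ^ n •
            ((G c * (G (c + b))⁻¹ * (G (-b))⁻¹) ^ n • ((q (c + b) * p (-b)) * p b)) := by
            rw [smul_mul_assoc]
      _ = (G 0 * (G (-b))⁻¹ * (G b)⁻¹) ^ n •
            ((G c * (G (c + b))⁻¹ * (G (-b))⁻¹) ^ n • (q (c + b) * (p (-b) * p b))) := by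
            rw [mul_assoc (q (c + b)) (p (-b)) (p b)]
      _ = (G 0 * (G (-b))⁻¹ * (G b)⁻¹) ^ n •
            ((G c * (G (c + b))⁻¹ * (G (-b))⁻¹) ^ n • (q (c + b) * p 0)) := by
            rw [hp, hbb]
  have hcore : (G (c + b) * (G c)⁻¹ * (G b)⁻¹) ^ n • (q c * p b) =
      ((G 0 * (G (-b))⁻¹ * (G b)⁻¹) * (G c * (G (c + b))⁻¹ * (G (-b))⁻¹)) ^ n •
        (q (c + b) * p 0) := by
    rw [← hheis c b, h1, smul_smul, ← mul_zpow]
  have ha : q (a - c) * q c = q a := by rw [hq]; congr 1; abel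
  have hsum : a - c + (c + b) = a + b := by abel
  calc (G (c + b) * (G c)⁻¹ * (G b)⁻¹) ^ n • (q a * p b)
      = (G (c + b) * (G c)⁻¹ * (G b)⁻¹) ^ n • ((q (a - c) * q c) * p b) := by rw [ha]
    _ = (G (c + b) * (G c)⁻¹ * (G b)⁻¹) ^ n • (q (a - c) * (q c * p b)) := by
          rw [mul_assoc (q (a - c)) (q c) (p b)]
    _ = q (a - c) * ((G (c + b) * (G c)⁻¹ * (G b)⁻¹) ^ n • (q c * p b)) :=
          (mul_smul_comm _ _ _).symm
    _ = q (a - c) * (((G 0 * (G (-b))⁻¹ * (G b)⁻¹) * (G c * (G (c + b))⁻¹ * (G (-b))⁻¹)) ^ n •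
          (q (c + b) * p 0)) := by rw [hcore]
    _ = ((G 0 * (G (-b))⁻¹ * (G b)⁻¹) * (G c * (G (c + b))⁻¹ * (G (-b))⁻¹)) ^ n •
          (q (a - c) * (q (c + b) * p 0)) := mul_smul_comm _ _ _
    _ = ((G 0 * (G (-b))⁻¹ * (G b)⁻¹) * (G c * (G (c + b))⁻¹ * (G (-b))⁻¹)) ^ n •
          ((q (a - c) * q (c + b)) * p 0) := by
          rw [mul_assoc (q (a - c)) (q (c + b)) (p 0)]
    _ = ((G 0 * (G (-b))⁻¹ * (G b)⁻¹) * (G c * (G (c + b))⁻¹ * (G (-b))⁻¹)) ^ n •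
          (q (a + b) * p 0) := by rw [hq, hsum]

/-- Combination lemma: four smul relations plus a scalar identity give `Q1 = Q2`. -/
theorem heisenberg_combine {R : Type*} [AddCommMonoid R] [Module ℂ R]
    {c1 c2 c3 c4 d1 d2 d3 d4 : ℂ} {Q1 Q2 W v : R}
    (h1 : c1 • Q1 = d1 • v) (h2 : c2 • Q2 = d2 • v)
    (h3 : c3 • W = d3 • v) (h4 : c4 • W = d4 • v)
    (hS : c2 * d1 * (c3 * d4) = c1 * d2 * (c4 * d3))
    (hne : c1 * c2 * (c3 * d4) ≠ 0) : Q1 = Q2 := by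
  have lemC : (c4 * d3) • v = (c3 * d4) • v := by
    have e3 := congrArg (fun r => c4 • r) h3
    have e4 := congrArg (fun r => c3 • r) h4
    simp only [smul_smul] at e3 e4
    rw [mul_comm c4 c3] at e3
    exact e3.symm.trans e4
  have k1 := congrArg (fun r => (c2 * (c3 * d4)) • r) h1
  have k2 := congrArg (fun r => (c1 * (c3 * d4)) • r) h2
  simp only [smul_smul] at k1 k2
  have kC := congrArg (fun r => (c1 * d2) • r) lemC
  simp only [smul_smul] at kC
  have key : (c1 * c2 * (c3 * d4)) • Q1 = (c1 * c2 * (c3 * d4)) • Q2 := by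
    calc (c1 * c2 * (c3 * d4)) • Q1
        = (c2 * (c3 * d4) * c1) • Q1 := by
          rw [show c1 * c2 * (c3 * d4) = c2 * (c3 * d4) * c1 from by ring]
      _ = (c2 * (c3 * d4) * d1) • v := k1
      _ = (c1 * d2 * (c4 * d3)) • v := by
          rw [show c2 * (c3 * d4) * d1 = c2 * d1 * (c3 * d4) from by ring, hS]
      _ = (c1 * d2 * (c3 * d4)) • v := kC
      _ = (c1 * (c3 * d4) * d2) • v := by
          rw [show c1 * d2 * (c3 * d4) = c1 * (c3 * d4) * d2 from by ring]
      _ = (c1 * (c3 * d4) * c2) • Q2 := k2.symm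
      _ = (c1 * c2 * (c3 * d4)) • Q2 := by
          rw [show c1 * (c3 * d4) * c2 = c1 * c2 * (c3 * d4) from by ring]
  calc Q1 = (c1 * c2 * (c3 * d4))⁻¹ • ((c1 * c2 * (c3 * d4)) • Q1) :=
        (inv_smul_smul₀ hne Q1).symm
    _ = (c1 * c2 * (c3 * d4))⁻¹ • ((c1 * c2 * (c3 * d4)) • Q2) := by rw [key]
    _ = Q2 := inv_smul_smul₀ hne Q2

/-- for a Heisenberg pair `(p,q)` of level `n` of u-operators, the sum
`⟨p+q;x⟩ := ⟨x⟩ⁿ⟨q;x⟩⟨p;x⟩` is again a u-operator (a group homomorphism). -/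
theorem heisenberg_sum_is_u_operator
    {A R : Type*} [AddCommGroup A] [Ring R] [Algebra ℂ R]
    (G : A → ℂ) (hG0 : ∀ x, G x ≠ 0) (hGneg : ∀ x, G x = G (-x))
    (hbk_left : ∀ x y z, G (x + y + z) * (G (x + y))⁻¹ * (G z)⁻¹ =
      (G (x + z) * (G x)⁻¹ * (G z)⁻¹) * (G (y + z) * (G y)⁻¹ * (G z)⁻¹))
    (hbk_right : ∀ x y z, G (x + (y + z)) * (G x)⁻¹ * (G (y + z))⁻¹ =
      (G (x + y) * (G x)⁻¹ * (G y)⁻¹) * (G (x + z) * (G x)⁻¹ * (G z)⁻¹))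
    (n : ℤ) (p q : A → R)
    (hp : ∀ x y, p x * p y = p (x + y)) (hq : ∀ x y, q x * q y = q (x + y))
    (hheis : ∀ x y, p x * q y =
      (G (x + y) * (G x)⁻¹ * (G y)⁻¹) ^ n • (q x * p y)) :
    ∀ x y : A, ((G x ^ n) • (q x * p x)) * ((G y ^ n) • (q y * p y)) =
      (G (x + y) ^ n) • (q (x + y) * p (x + y)) := by
  intro x y
  have hx := hG0 x
  have hy := hG0 y
  have hs := hG0 (x + y)
  have ht := hG0 (y + y)
  have hG1 : G 0 = 1 := by
    have h := hbk_left 0 0 0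
    simp only [add_zero] at h
    rw [mul_inv_cancel₀ (hG0 0), one_mul] at h
    have h2 : (G 0)⁻¹ * (1 : ℂ) = (G 0)⁻¹ * (G 0)⁻¹ := by rw [mul_one]; exact h
    have h3 := mul_left_cancel₀ (inv_ne_zero (hG0 0)) h2
    exact inv_eq_one.mp h3.symm
  -- step 1: rewrite LHS
  have hAB : (q x * p x) * (q y * p y) =
      (G (x + y) * (G x)⁻¹ * (G y)⁻¹) ^ n • (q (x + x) * p (y + y)) := by
    calc (q x * p x) * (q y * p y)
        = q x * ((p x * q y) * p y) := by simp only [mul_assoc]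
      _ = q x * (((G (x + y) * (G x)⁻¹ * (G y)⁻¹) ^ n • (q x * p y)) * p y) := by
          rw [hheis]
      _ = q x * ((G (x + y) * (G x)⁻¹ * (G y)⁻¹) ^ n • ((q x * p y) * p y)) := by
          rw [smul_mul_assoc]
      _ = (G (x + y) * (G x)⁻¹ * (G y)⁻¹) ^ n • (q x * ((q x * p y) * p y)) :=
          mul_smul_comm _ _ _
      _ = (G (x + y) * (G x)⁻¹ * (G y)⁻¹) ^ n • ((q x * q x) * (p y * p y)) := by
          simp only [mul_assoc]
      _ = (G (x + y) * (G x)⁻¹ * (G y)⁻¹) ^ n • (q (x + x) * p (y + y)) := by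
          rw [hq, hp]
  have hstep1 : (G x ^ n • (q x * p x)) * (G y ^ n • (q y * p y)) =
      (G x ^ n * G y ^ n * (G (x + y) * (G x)⁻¹ * (G y)⁻¹) ^ n) •
        (q (x + x) * p (y + y)) := by
    rw [smul_mul_assoc, mul_smul_comm, smul_smul, hAB, smul_smul]
  have hsc : G x ^ n * G y ^ n * (G (x + y) * (G x)⁻¹ * (G y)⁻¹) ^ n = G (x + y) ^ n := by
    rw [← mul_zpow, ← mul_zpow]
    congr 1
    field_simp
  -- the four normal-form instances
  have inst1 := heisenberg_aux_core G n p q hp hq hheis (x + x) (-y) (y + y)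
  rw [show (-y + (y + y) : A) = y from by abel, ← hGneg y, ← hGneg (y + y), hG1] at inst1
  have inst2 := heisenberg_aux_core G n p q hp hq hheis (x + y) (-x) (x + y)
  rw [show (-x + (x + y) : A) = y from by abel,
      show (x + y + (x + y) : A) = x + x + (y + y) from by abel,
      ← hGneg x, ← hGneg (x + y), hG1] at inst2
  have inst3 := heisenberg_aux_core G n p q hp hq hheis (x + x + (y + y) + y) (x + y) (-y)
  rw [show (x + y + -y : A) = x from by abel,
      show (x + x + (y + y) + y + -y : A) = x + x + (y + y) from by abel,
      neg_neg, ← hGneg y, hG1] at inst3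
  have inst4 := heisenberg_aux_core G n p q hp hq hheis (x + x + (y + y) + y) (y + y) (-y)
  rw [show (y + y + -y : A) = y from by abel,
      show (x + x + (y + y) + y + -y : A) = x + x + (y + y) from by abel,
      neg_neg, ← hGneg y, hG1] at inst4
  have h3ne : ∀ u v w : ℂ, u ≠ 0 → v ≠ 0 → w ≠ 0 → u * v⁻¹ * w⁻¹ ≠ 0 := fun u v w hu hv hw =>
    mul_ne_zero (mul_ne_zero hu (inv_ne_zero hv)) (inv_ne_zero hw)
  have hQ : q (x + x) * p (y + y) = q (x + y) * p (x + y) := by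
    refine heisenberg_combine inst1 inst2 inst3 inst4 ?_ ?_
    · simp only [← mul_zpow]
      congr 1
      have e2 : G y * (G y)⁻¹ = 1 := mul_inv_cancel₀ hy
      have e3 : G (x + y) * (G (x + y))⁻¹ = 1 := mul_inv_cancel₀ hs
      have e4 : G (y + y) * (G (y + y))⁻¹ = 1 := mul_inv_cancel₀ ht
      linear_combination
        (G y * G x * (G y)⁻¹ ^ 5 * (G x)⁻¹ * (G (y + y))⁻¹ ^ 2 * (G (x + y))⁻¹ ^ 2) *
          (e4 - e3) -
        (G x * (G x)⁻¹ * (G y)⁻¹ ^ 5 * G y *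
          (G (x + y) * (G (x + y))⁻¹ ^ 3 * (G (y + y))⁻¹ ^ 2 -
            G (y + y) * (G (y + y))⁻¹ ^ 3 * (G (x + y))⁻¹ ^ 2)) * e2
    · refine mul_ne_zero (mul_ne_zero ?_ ?_) (mul_ne_zero ?_ ?_)
      · exact zpow_ne_zero n (h3ne _ _ _ hy hy ht)
      · exact zpow_ne_zero n (h3ne _ _ _ hy hx hs)
      · exact zpow_ne_zero n (h3ne _ _ _ hx hs hy)
      · exact zpow_ne_zero n
          (mul_ne_zero (h3ne _ _ _ one_ne_zero hy hy) (h3ne _ _ _ ht hy hy))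
  rw [hstep1, hsc, hQ]
end
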